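/- For density matrices ρ, σ with σ positive definite and any α ∈ [0,1], χ²_{1/2}(ρ,σ) ≤ χ²_α(ρ,σ), i.e., tr[(ρ-σ)σ^{-1/2}(ρ-σ)σ^{-1/2}] ≤ tr[(ρ-σ)σ^{-α}(ρ-σ)σ^{α-1}]; the minimum over α of the α-χ²-divergence is reached at α = 1/2. -/

import Mathlib

open Matrix
open scoped ComplexOrder

/-- The square root of a positive semidefinite matrix, as `Matrix.PosSemidef.sqrt` was defined in the older Mathlib. -/
noncomputable def Matrix.PosSemidef.sqrt {d : ℕ} {A : Matrix (Fin d) (Fin d) ℂ} (hA : A.PosSemidef) :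
    Matrix (Fin d) (Fin d) ℂ :=
  (hA.1.eigenvectorUnitary : Matrix (Fin d) (Fin d) ℂ) *
    Matrix.diagonal ((↑) ∘ (fun x : ℝ => Real.sqrt x) ∘ hA.1.eigenvalues) *
    (star hA.1.eigenvectorUnitary : Matrix (Fin d) (Fin d) ℂ)

/-- The trace norm `‖A‖₁ = tr √(A†A)` of a complex matrix. -/
noncomputable def traceNorm {d : ℕ} (A : Matrix (Fin d) (Fin d) ℂ) : ℝ :=
  ((Matrix.posSemidef_conjTranspose_mul_self A).sqrt.trace).re

/-- Real matrix power of a Hermitian matrix via the spectral decomposition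
(defined as `0` on the kernel for negative exponents, i.e. a pseudo-inverse,
and as the junk value `0` for non-Hermitian input). -/
noncomputable def mrpow {d : ℕ} (σ : Matrix (Fin d) (Fin d) ℂ) (α : ℝ) :
    Matrix (Fin d) (Fin d) ℂ :=
  if hσ : σ.IsHermitian then
    (hσ.eigenvectorUnitary : Matrix (Fin d) (Fin d) ℂ) *
      Matrix.diagonal (fun i => ((hσ.eigenvalues i ^ α : ℝ) : ℂ)) *
      star (hσ.eigenvectorUnitary : Matrix (Fin d) (Fin d) ℂ)
  else 0

/-- The mean α-family of quantum χ²-divergences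
`χ²_α(ρ,σ) = tr[(ρ-σ) σ^{-α} (ρ-σ) σ^{α-1}]` (with pseudo-inverse powers of `σ`). -/
noncomputable def chiAlpha {d : ℕ} (α : ℝ) (ρ σ : Matrix (Fin d) (Fin d) ℂ) : ℝ :=
  (((ρ - σ) * mrpow σ (-α) * (ρ - σ) * mrpow σ (α - 1)).trace).re

/-!
Write `σ = U diag(λ) U*` and `A = U* (ρ - σ) U`. Then `χ²_α(ρ,σ) = ∑ᵢⱼ |Aᵢⱼ|² λⱼ^{-α} λᵢ^{α-1}`,
and since `A` is Hermitian, `|Aᵢⱼ| = |Aⱼᵢ|`, so the weight of `(i,j)` may be replaced by the mean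
of `λⱼ^{-α} λᵢ^{α-1}` and `λᵢ^{-α} λⱼ^{α-1}`. These two have product `(λᵢλⱼ)⁻¹`, so by AM–GM
their mean is at least `(λᵢλⱼ)^{-1/2}`, the weight at `α = 1/2`.
-/

theorem trace_mul_conj_mul_mul_conj {n : Type*} [Fintype n] {R : Type*} [CommSemiring R]
    (A U V F G : Matrix n n R) :
    (A * (U * F * V) * A * (U * G * V)).trace = ((V * A * U) * F * (V * A * U) * G).trace := by
  rw [show A * (U * F * V) * A * (U * G * V) = (A * U * F * V * A * U * G) * V by
    simp only [Matrix.mul_assoc], trace_mul_comm]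
  simp only [Matrix.mul_assoc]

theorem Matrix.IsHermitian.normSq_apply_comm {n : Type*} {A : Matrix n n ℂ} (hA : A.IsHermitian)
    (i j : n) : Complex.normSq (A i j) = Complex.normSq (A j i) := by
  rw [← hA.apply j i, Complex.star_def, Complex.normSq_conj]

theorem re_trace_mul_diagonal_mul_mul_diagonal {n : Type*} [Fintype n] [DecidableEq n]
    {A : Matrix n n ℂ} (hA : A.IsHermitian) (f g : n → ℝ) :
    (A * diagonal (fun i => (f i : ℂ)) * A * diagonal (fun i => (g i : ℂ))).trace.re
      = ∑ i, ∑ j, Complex.normSq (A i j) * (f j * g i) := by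
  simp only [trace, diag_apply, mul_diagonal]
  simp only [mul_apply, diagonal_apply, mul_ite, mul_zero, Finset.sum_ite_eq', Finset.mem_univ,
    if_true, Finset.sum_mul, Complex.re_sum]
  refine Finset.sum_congr rfl fun i _ => Finset.sum_congr rfl fun j _ => ?_
  rw [← hA.apply j i, Complex.star_def,
    show A i j * f j * (starRingEnd ℂ) (A i j) * g i = A i j * (starRingEnd ℂ) (A i j) * (f j * g i)
      by ring, Complex.mul_conj]
  norm_cast

theorem chiAlpha_eq_sum_normSq {d : ℕ} (α : ℝ) {ρ σ : Matrix (Fin d) (Fin d) ℂ}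
    (hρ : ρ.IsHermitian) (hσ : σ.IsHermitian) :
    chiAlpha α ρ σ = ∑ i, ∑ j,
      Complex.normSq ((star (hσ.eigenvectorUnitary : Matrix (Fin d) (Fin d) ℂ) * (ρ - σ) *
        hσ.eigenvectorUnitary) i j) * (hσ.eigenvalues j ^ (-α) * hσ.eigenvalues i ^ (α - 1)) := by
  have hA : (star (hσ.eigenvectorUnitary : Matrix (Fin d) (Fin d) ℂ) * (ρ - σ) *
      hσ.eigenvectorUnitary).IsHermitian :=
    isHermitian_conjTranspose_mul_mul _ (hρ.sub hσ)
  simp only [chiAlpha, mrpow, dif_pos hσ]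
  rw [trace_mul_conj_mul_mul_conj, re_trace_mul_diagonal_mul_mul_diagonal hA]

theorem two_mul_rpow_half_le_add {x y : ℝ} (hx : 0 < x) (hy : 0 < y) (α : ℝ) :
    2 * (y ^ (-(1/2) : ℝ) * x ^ ((1/2 : ℝ) - 1)) ≤
      y ^ (-α) * x ^ (α - 1) + x ^ (-α) * y ^ (α - 1) := by
  set a := y ^ (-α) * x ^ (α - 1)
  set b := x ^ (-α) * y ^ (α - 1)
  set t := y ^ (-(1/2) : ℝ) * x ^ ((1/2 : ℝ) - 1)
  have ha : 0 < a := by positivity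
  have ht : 0 < t := by positivity
  have hab : a * b = t * t := by
    calc a * b = (y ^ (-α) * y ^ (α - 1)) * (x ^ (α - 1) * x ^ (-α)) := by ring
      _ = (y ^ (-(1/2) : ℝ) * y ^ (-(1/2) : ℝ)) * (x ^ ((1/2 : ℝ) - 1) * x ^ ((1/2 : ℝ) - 1)) := by
        simp only [← Real.rpow_add hx, ← Real.rpow_add hy]; ring_nf
      _ = t * t := by ring
  nlinarith [sq_nonneg (a - t)]

theorem sum_mul_rpow_half_le {ι : Type*} [Fintype ι] {c : ι → ι → ℝ} {s : ι → ℝ}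
    (hc : ∀ i j, 0 ≤ c i j) (hc_symm : ∀ i j, c i j = c j i) (hs : ∀ i, 0 < s i) (α : ℝ) :
    ∑ i, ∑ j, c i j * (s j ^ (-(1/2) : ℝ) * s i ^ ((1/2 : ℝ) - 1)) ≤
      ∑ i, ∑ j, c i j * (s j ^ (-α) * s i ^ (α - 1)) := by
  have h_swap : ∑ i, ∑ j, c i j * (s i ^ (-α) * s j ^ (α - 1)) =
      ∑ i, ∑ j, c i j * (s j ^ (-α) * s i ^ (α - 1)) := by
    rw [Finset.sum_comm]
    simp only [hc_symm]
  have h_termwise := Finset.sum_le_sum fun i (_ : i ∈ Finset.univ) =>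
    Finset.sum_le_sum fun j (_ : j ∈ Finset.univ) =>
      mul_le_mul_of_nonneg_left (two_mul_rpow_half_le_add (hs i) (hs j) α) (hc i j)
  simp only [mul_add, Finset.sum_add_distrib, h_swap, mul_left_comm _ (2 : ℝ),
    ← Finset.mul_sum] at h_termwise
  linarith

theorem chiAlpha_min_at_half_general (d : ℕ) (ρ σ : Matrix (Fin d) (Fin d) ℂ)
    (α : ℝ)
    (hρ : ρ.PosSemidef)
    (hσ : σ.PosDef) :
    chiAlpha (1/2) ρ σ ≤ chiAlpha α ρ σ := by
  have hσh : σ.IsHermitian := hσ.isHermitian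
  have hΔ := isHermitian_conjTranspose_mul_mul (hσh.eigenvectorUnitary : Matrix (Fin d) (Fin d) ℂ)
    (hρ.isHermitian.sub hσh)
  rw [chiAlpha_eq_sum_normSq _ hρ.isHermitian hσh, chiAlpha_eq_sum_normSq _ hρ.isHermitian hσh]
  exact sum_mul_rpow_half_le (fun _ _ => Complex.normSq_nonneg _) hΔ.normSq_apply_comm
    hσ.eigenvalues_pos α

/-- For density matrices `ρ, σ` with `σ` positive definite and `α ∈ [0,1]`,
`χ²_{1/2}(ρ,σ) ≤ χ²_α(ρ,σ)`: the minimum over `α` is attained at `α = 1/2`. -/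
theorem chiAlpha_min_at_half (d : ℕ) (ρ σ : Matrix (Fin d) (Fin d) ℂ)
    (α : ℝ) (hα : α ∈ Set.Icc (0 : ℝ) 1)
    (hρ : ρ.PosSemidef) (hρtr : ρ.trace = 1)
    (hσ : σ.PosDef) (hσtr : σ.trace = 1) :
    chiAlpha (1/2) ρ σ ≤ chiAlpha α ρ σ :=
  chiAlpha_min_at_half_general d ρ σ α hρ hσ
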